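/- arXiv:1602.02482 — 3 statements merged into one kernel-verified Lean document; each statement's English description precedes it below -/
import Mathlib

section
/- Suppose Bar(S,R) carries an ideal simplicial algebra structure. Then in B_k: the set S_k = {(s,0,...,0) : s ∈ S} is an ideal of B_k isomorphic to S as a k-algebra; the set R_k = {(0,r_1,...,r_k) : r_i ∈ R} is an ideal of B_k; B_k = S_k + R_k; and S_k ∩ R_k = {0}. -/
/-- The face maps of the bar construction `Bar(S,R)` on `η : R → S`:
`d₀(s,r₁,…) = (s + η r₁, r₂, …)`, `dᵢ` adds consecutive `R`-coordinates,
and the last face drops the last coordinate. -/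
def bface {R S : Type*} [NonUnitalCommRing R] [NonUnitalCommRing S]
    (η : R → S) (n : ℕ) (i : Fin (n + 2)) :
    (S × (Fin (n + 1) → R)) → (S × (Fin n → R)) := fun p =>
  if i = 0 then (p.1 + η (p.2 0), fun j => p.2 j.succ)
  else if i = Fin.last (n + 1) then (p.1, fun j => p.2 j.castSucc)
  else (p.1, fun j =>
    if (j : ℕ) + 1 < (i : ℕ) then p.2 j.castSucc
    else if (j : ℕ) + 1 = (i : ℕ) then p.2 j.castSucc + p.2 j.succ
    else p.2 j.succ)

/-- The degeneracy maps of `Bar(S,R)`: `sᵢ` inserts `0_R` after position `i`. -/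
def bdegen {R S : Type*} [NonUnitalCommRing R] [NonUnitalCommRing S]
    (n : ℕ) (i : Fin (n + 1)) :
    (S × (Fin n → R)) → (S × (Fin (n + 1) → R)) := fun p =>
  (p.1, Fin.insertNth i 0 p.2)

/-- An ideal simplicial algebra structure on `Bar(S,R)`: each `B_n = S × Rⁿ`
carries a `k`-algebra multiplication `∗` (`k`-bilinear, associative, commutative),
`B₀ = S` as an algebra, all faces and degeneracies are algebra homomorphisms, and
`(s,0,…,0) ∗ (s',r'₁,…,r'ₙ) = (ss',0,…,0)`. -/
structure IdealSimpAlg (k : Type*) [CommRing k] {R S : Type*}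
    [NonUnitalCommRing R] [NonUnitalCommRing S] [Module k R] [Module k S]
    (η : R → S) where
  mul : ∀ n : ℕ, (S × (Fin n → R)) → (S × (Fin n → R)) → (S × (Fin n → R))
  mul_zero_level : ∀ x y : S × (Fin 0 → R), (mul 0 x y).1 = x.1 * y.1
  mul_comm : ∀ n x y, mul n x y = mul n y x
  mul_assoc : ∀ n x y z, mul n (mul n x y) z = mul n x (mul n y z)
  left_distrib : ∀ n x y z, mul n x (y + z) = mul n x y + mul n x z
  right_distrib : ∀ n x y z, mul n (x + y) z = mul n x z + mul n y z
  smul_mul : ∀ n (c : k) x y, mul n (c • x) y = c • mul n x y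
  mul_smul : ∀ n (c : k) x y, mul n x (c • y) = c • mul n x y
  face_mul : ∀ n (i : Fin (n + 2)) x y,
    bface η n i (mul (n + 1) x y) = mul n (bface η n i x) (bface η n i y)
  degen_mul : ∀ n (i : Fin (n + 1)) x y,
    bdegen n i (mul n x y) = mul (n + 1) (bdegen n i x) (bdegen n i y)
  compat : ∀ n (s s' : S) (b : Fin n → R),
    mul n (s, 0) (s', b) = (s * s', 0)
variable {k R S : Type*} [CommRing k] [NonUnitalCommRing R] [NonUnitalCommRing S]
  [Module k R] [Module k S]

lemma mul_fst (η : R →ₙₐ[k] S) (A : IdealSimpAlg k (⇑η)) :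
    ∀ (n : ℕ) (x y : S × (Fin n → R)), (A.mul n x y).1 = x.1 * y.1 := by
  intro n
  induction n with
  | zero => exact A.mul_zero_level
  | succ m ih =>
    intro x y
    have h := A.face_mul m (Fin.last (m + 1)) x y
    have hlast : (Fin.last (m + 1) : Fin (m + 2)) ≠ 0 := by
      simp [Fin.ext_iff]
    have hb : ∀ p : S × (Fin (m + 1) → R),
        (bface (⇑η) m (Fin.last (m + 1)) p).1 = p.1 := by
      intro p; simp [bface, hlast]
    have := congrArg Prod.fst h
    rw [hb] at this
    rw [this, ih, hb, hb]

/-- for `k ≥ 1`, `S_k = {(s,0,…,0)}` is an ideal of `B_k`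
isomorphic to `S`, `R_k = {(0,r₁,…,r_k)}` is an ideal of `B_k`,
`B_k = S_k + R_k` and `S_k ∩ R_k = {0}`. -/
theorem stmt11 (η : R →ₙₐ[k] S) (A : IdealSimpAlg k (⇑η)) (n : ℕ) :
    let Sk : Set (S × (Fin (n + 1) → R)) := {p | p.2 = 0}
    let Rk : Set (S × (Fin (n + 1) → R)) := {p | p.1 = 0}
    -- `S_k` is an ideal of `B_{n+1}`
    ((0 : S × (Fin (n + 1) → R)) ∈ Sk ∧
      (∀ x y, x ∈ Sk → y ∈ Sk → x + y ∈ Sk) ∧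
      (∀ x, x ∈ Sk → -x ∈ Sk) ∧
      (∀ x y, x ∈ Sk → A.mul (n + 1) x y ∈ Sk)) ∧
    -- `S_k` is isomorphic to `S` via `s ↦ (s,0,…,0)`
    (Function.Injective (fun s : S => ((s, 0) : S × (Fin (n + 1) → R))) ∧
      Set.range (fun s : S => ((s, 0) : S × (Fin (n + 1) → R))) = Sk ∧
      (∀ s s' : S, ((s + s', 0) : S × (Fin (n + 1) → R)) = (s, 0) + (s', 0)) ∧
      (∀ s s' : S, ((s * s', 0) : S × (Fin (n + 1) → R)) = A.mul (n + 1) (s, 0) (s', 0))) ∧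
    -- `R_k` is an ideal of `B_{n+1}`
    ((0 : S × (Fin (n + 1) → R)) ∈ Rk ∧
      (∀ x y, x ∈ Rk → y ∈ Rk → x + y ∈ Rk) ∧
      (∀ x, x ∈ Rk → -x ∈ Rk) ∧
      (∀ x y, x ∈ Rk → A.mul (n + 1) x y ∈ Rk)) ∧
    -- `B_k = S_k + R_k` and `S_k ∩ R_k = {0}`
    (∀ x : S × (Fin (n + 1) → R), ∃ u ∈ Sk, ∃ v ∈ Rk, x = u + v) ∧
    Sk ∩ Rk = {0} := by
  intro Sk Rk
  have hfst := mul_fst η A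
  refine ⟨⟨rfl, ?_, ?_, ?_⟩, ⟨?_, ?_, ?_, ?_⟩, ⟨rfl, ?_, ?_, ?_⟩, ?_, ?_⟩
  · intro x y hx hy
    have hx' : x.2 = 0 := hx
    have hy' : y.2 = 0 := hy
    show (x + y).2 = 0
    simp [Prod.snd_add, hx', hy']
  · intro x hx
    show (-x).2 = 0
    simp [Set.mem_setOf_eq.mp hx]
  · intro x y hx
    have hx' : x = (x.1, 0) := by
      ext <;> simp [Set.mem_setOf_eq.mp hx]
    rw [hx']
    cases y with
    | mk y1 y2 => rw [A.compat]; rfl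
  · intro s s' h
    exact (Prod.mk.injEq _ _ _ _ ▸ h).1
  · ext p
    constructor
    · rintro ⟨s, rfl⟩; rfl
    · intro hp
      exact ⟨p.1, by ext <;> simp [Set.mem_setOf_eq.mp hp]⟩
  · intro s s'; simp
  · intro s s'
    rw [A.compat]
  · intro x y hx hy
    show (x + y).1 = 0
    simp [Prod.fst_add, Set.mem_setOf_eq.mp hx, Set.mem_setOf_eq.mp hy]
  · intro x hx
    show (-x).1 = 0
    simp [Set.mem_setOf_eq.mp hx]
  · intro x y hx
    show (A.mul (n + 1) x y).1 = 0
    rw [hfst, Set.mem_setOf_eq.mp hx, zero_mul]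
  · intro x
    exact ⟨(x.1, 0), rfl, (0, x.2), rfl, by ext <;> simp⟩
  · ext p
    constructor
    · rintro ⟨h1, h2⟩
      have : p = 0 := by ext <;> simp_all [Sk, Rk]
      simp [this]
    · rintro rfl
      exact ⟨rfl, rfl⟩
end

section
/- Let η: R → S be a crossed module of commutative k-algebras and equip B_k = S × R^k with the multiplication induced by the crossed module structure. Then the map η_k: B_k → S, (s, a_1, ..., a_k) ↦ s + η(a_1 + ... + a_k), is a k-algebra homomorphism. -/
/-- A crossed module of commutative `k`-algebras: `η : R → S` together with an
`S`-action on `R` (`k`-bilinear, additive in both variables, `s·(rr') = (s·r)r'`,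
`(ss')·r = s·(s'·r)`) satisfying (CM1) `η(s·r) = sη(r)` and (CM2) `η(r)·r' = rr'`. -/
structure CMod (k : Type*) [CommRing k] {R S : Type*}
    [NonUnitalCommRing R] [NonUnitalCommRing S] [Module k R] [Module k S]
    (η : R →ₙₐ[k] S) where
  act : S → R → R
  act_add : ∀ s r r', act s (r + r') = act s r + act s r'
  add_act : ∀ s s' r, act (s + s') r = act s r + act s' r
  smul_act : ∀ (c : k) s r, act (c • s) r = c • act s r
  act_smul : ∀ (c : k) s r, act s (c • r) = c • act s r
  act_mul : ∀ s r r', act s (r * r') = act s r * r'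
  mul_act : ∀ s s' r, act (s * s') r = act s (act s' r)
  cm1 : ∀ s r, η (act s r) = s * η r
  cm2 : ∀ r r', act (η r) r' = r * r'

/-- The multiplication on `B_n = S × Rⁿ` induced by a crossed module structure:
`(s,a₁,…) ∗ (s',b₁,…)` has `j`-th `R`-component
`s·b_j + s'·a_j + (∑_{i<j} a_i) b_j + a_j ∑_{i≤j} b_i`. -/
def mulB {k : Type*} [CommRing k] {R S : Type*}
    [NonUnitalCommRing R] [NonUnitalCommRing S] [Module k R] [Module k S]
    {η : R →ₙₐ[k] S} (C : CMod k η) (n : ℕ)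
    (x y : S × (Fin n → R)) : S × (Fin n → R) :=
  (x.1 * y.1, fun j =>
    C.act x.1 (y.2 j) + C.act y.1 (x.2 j)
      + (∑ i ∈ Finset.Iio j, x.2 i) * y.2 j
      + x.2 j * ∑ i ∈ Finset.Iic j, y.2 i)
variable {k R S : Type*} [CommRing k] [NonUnitalCommRing R] [NonUnitalCommRing S]
  [Module k R] [Module k S]

lemma pair_split {R : Type*} [NonUnitalCommRing R] {n : ℕ} (h : Fin n → Fin n → R) :
    (∑ j, ∑ i ∈ Finset.Iio j, h i j) + (∑ j, ∑ i ∈ Finset.Iic j, h j i)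
      = ∑ i, ∑ j, h i j := by
  classical
  rw [← Finset.sum_product' (s := Finset.univ) (t := Finset.univ) (f := fun i j => h i j)]
  rw [← Finset.sum_filter_add_sum_filter_not (Finset.univ ×ˢ Finset.univ)
    (fun p => p.1 < p.2) (fun p => h p.1 p.2)]
  congr 1
  · rw [Finset.sum_sigma']
    exact Finset.sum_nbij' (fun q => (q.2, q.1)) (fun p => ⟨p.2, p.1⟩)
      (by simp) (by simp) (by simp) (by simp) (fun _ _ => rfl)
  · rw [Finset.sum_sigma']
    exact Finset.sum_nbij' (fun q => (q.1, q.2)) (fun p => ⟨p.1, p.2⟩)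
      (by simp [not_lt]) (by simp [not_lt]) (by simp) (by simp) (fun _ _ => rfl)

theorem stmt15' {k R S : Type*} [CommRing k] [NonUnitalCommRing R] [NonUnitalCommRing S]
  [Module k R] [Module k S] (η : R →ₙₐ[k] S) (C : CMod k η) (n : ℕ)
    (ηn : (S × (Fin n → R)) → S) (hηn : ∀ p, ηn p = p.1 + η (∑ i, p.2 i)) :
    (∀ x y, ηn (x + y) = ηn x + ηn y) ∧
    (∀ (c : k) x, ηn (c • x) = c • ηn x) ∧
    (∀ x y, ηn (mulB C n x y) = ηn x * ηn y) := by
  refine ⟨?_, ?_, ?_⟩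
  · intro x y
    simp only [hηn, Prod.fst_add, Prod.snd_add, Pi.add_apply, Finset.sum_add_distrib, map_add]
    abel
  · intro c x
    simp only [hηn, Prod.smul_fst, Prod.smul_snd, Pi.smul_apply, ← Finset.smul_sum, map_smul,
      smul_add]
  · intro x y
    have hact : ∀ (s : S) (f : Fin n → R),
        η (∑ j, C.act s (f j)) = s * η (∑ j, f j) := by
      intro s f
      have h0 : (∑ j, C.act s (f j)) = C.act s (∑ j, f j) :=
        (map_sum (AddMonoidHom.mk' (C.act s) (C.act_add s)) f Finset.univ).symm
      rw [h0, C.cm1]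
    have hkey : (∑ j, ((∑ i ∈ Finset.Iio j, x.2 i) * y.2 j))
        + (∑ j, x.2 j * ∑ i ∈ Finset.Iic j, y.2 i)
        = (∑ i, x.2 i) * ∑ i, y.2 i := by
      have h1 : ∀ j : Fin n, (∑ i ∈ Finset.Iio j, x.2 i) * y.2 j
          = ∑ i ∈ Finset.Iio j, x.2 i * y.2 j := fun j => Finset.sum_mul _ _ _
      have h2 : ∀ j : Fin n, x.2 j * ∑ i ∈ Finset.Iic j, y.2 i
          = ∑ i ∈ Finset.Iic j, x.2 j * y.2 i := fun j => Finset.mul_sum _ _ _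
      simp only [h1, h2, pair_split (fun i j => x.2 i * y.2 j)]
      rw [Finset.sum_mul]
      exact Finset.sum_congr rfl fun i _ => (Finset.mul_sum _ _ _).symm
    have h3 : η (∑ j, (∑ i ∈ Finset.Iio j, x.2 i) * y.2 j)
        + η (∑ j, x.2 j * ∑ i ∈ Finset.Iic j, y.2 i)
        = η (∑ i, x.2 i) * η (∑ i, y.2 i) := by
      rw [← map_add, hkey, map_mul]
    simp only [hηn, mulB, Finset.sum_add_distrib, map_add, hact]
    rw [add_assoc (x.1 * η (∑ i, y.2 i) + y.1 * η (∑ i, x.2 i)), h3,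
        add_mul, mul_add, mul_add, mul_comm (η (∑ i, x.2 i)) y.1]
    abel

/-- for a crossed module `η : R → S` and `B_n = S × Rⁿ` with the induced
multiplication, the map `η_n : B_n → S`, `(s,a₁,…,aₙ) ↦ s + η(a₁+⋯+aₙ)`, is a
`k`-algebra homomorphism. -/
theorem stmt15 (η : R →ₙₐ[k] S) (C : CMod k η) (n : ℕ)
    (ηn : (S × (Fin n → R)) → S) (hηn : ∀ p, ηn p = p.1 + η (∑ i, p.2 i)) :
    (∀ x y, ηn (x + y) = ηn x + ηn y) ∧
    (∀ (c : k) x, ηn (c • x) = c • ηn x) ∧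
    (∀ x y, ηn (mulB C n x y) = ηn x * ηn y) := by
  exact stmt15' η C n ηn hηn
end

section
/- Let η: R → S be a crossed module of commutative k-algebras and equip B_k = S × R^k with the induced algebra structure. Then for 1 ≤ i ≤ k-1, the face map d_i: B_k → B_{k-1}, (s, a_1, ..., a_k) ↦ (s, a_1, ..., a_{i} + a_{i+1}, ..., a_k), is a k-algebra homomorphism, as is d_k: (s,a_1,...,a_k) ↦ (s,a_1,...,a_{k-1}), and each degeneracy s_i inserting 0_R is a k-algebra homomorphism. -/
variable {k R S : Type*} [CommRing k] [NonUnitalCommRing R] [NonUnitalCommRing S]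
  [Module k R] [Module k S]


private def SR {m : ℕ} (a : Fin m → R) (j : ℕ) : R :=
  ∑ t ∈ Finset.range j, if h : t < m then a ⟨t, h⟩ else 0

private lemma SR_succ {m : ℕ} (a : Fin m → R) (j : ℕ) (h : j < m) :
    SR a (j + 1) = SR a j + a ⟨j, h⟩ := by
  rw [SR, Finset.sum_range_succ, dif_pos h]; rfl

private lemma sum_Iio_eq {m : ℕ} (a : Fin m → R) (j : Fin m) :
    ∑ t ∈ Finset.Iio j, a t = SR a j.val := by
  have h := Finset.sum_map (Finset.Iio j) Fin.valEmbedding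
      (fun t => if h : t < m then a ⟨t, h⟩ else 0)
  rw [Fin.map_valEmbedding_Iio] at h
  rw [SR, ← Nat.Iio_eq_range, h]
  exact Finset.sum_congr rfl fun t _ => by simp

private lemma sum_Iic_eq {m : ℕ} (a : Fin m → R) (j : Fin m) :
    ∑ t ∈ Finset.Iic j, a t = SR a (j.val + 1) := by
  have h := Finset.sum_map (Finset.Iic j) Fin.valEmbedding
      (fun t => if h : t < m then a ⟨t, h⟩ else 0)
  rw [Fin.map_valEmbedding_Iic] at h
  have h2 : (Finset.Iic (j : ℕ)) = Finset.range (j.val + 1) := by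
    ext t; simp [Nat.lt_succ_iff]
  rw [SR, ← h2, h]
  exact Finset.sum_congr rfl fun t _ => by simp

private lemma SR_castSucc {m : ℕ} (a : Fin (m + 1) → R) (j : ℕ) (hj : j ≤ m) :
    SR (fun t => a t.castSucc) j = SR a j := by
  refine Finset.sum_congr rfl fun t ht => ?_
  have h1 : t < m := lt_of_lt_of_le (Finset.mem_range.mp ht) hj
  rw [dif_pos h1, dif_pos (Nat.lt_succ_of_lt h1)]; rfl

private def fmid {n : ℕ} (I : ℕ) (a : Fin (n + 1) → R) : Fin n → R := fun j =>
  if (j : ℕ) + 1 < I then a j.castSucc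
  else if (j : ℕ) + 1 = I then a j.castSucc + a j.succ
  else a j.succ


private lemma fmid_apply {n I : ℕ} (a : Fin (n + 1) → R) (j : ℕ) (h : j < n) :
    fmid I a ⟨j, h⟩ =
      if j + 1 < I then a ⟨j, by omega⟩
      else if j + 1 = I then a ⟨j, by omega⟩ + a ⟨j + 1, by omega⟩
      else a ⟨j + 1, by omega⟩ := by
  simp only [fmid, Fin.castSucc_mk, Fin.succ_mk]

private lemma SR_fmid_lt {n I : ℕ} (a : Fin (n + 1) → R) (hIn : I ≤ n) :
    ∀ j, j < I → SR (fmid I a) j = SR a j := by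
  intro j
  induction j with
  | zero => intro _; rfl
  | succ j ih =>
    intro hj
    have hjn : j < n := lt_of_lt_of_le (Nat.lt_of_succ_lt hj) hIn
    rw [SR_succ _ j hjn, SR_succ _ j (Nat.lt_succ_of_lt hjn),
      ih (Nat.lt_of_succ_lt hj)]
    rw [fmid_apply a j hjn, if_pos hj]

private lemma SR_fmid_ge {n I : ℕ} (a : Fin (n + 1) → R) (hI1 : 1 ≤ I) (hIn : I ≤ n) :
    ∀ j, I ≤ j → j ≤ n → SR (fmid I a) j = SR a (j + 1) := by
  intro j hj
  induction j, hj using Nat.le_induction with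
  | base =>
    intro _
    obtain ⟨m, rfl⟩ : ∃ m, I = m + 1 := ⟨I - 1, by omega⟩
    have hmn : m < n := by omega
    rw [SR_succ _ m hmn, SR_fmid_lt a hIn m (by omega),
      SR_succ a (m + 1) (by omega), SR_succ a m (by omega)]
    have : fmid (m + 1) a ⟨m, hmn⟩ = a ⟨m, by omega⟩ + a ⟨m + 1, by omega⟩ := by
      rw [fmid_apply a m hmn, if_neg (by omega), if_pos (by omega)]
    rw [this, add_assoc]
  | succ j hj ih =>
    intro hjn
    have hjn' : j < n := by omega
    rw [SR_succ _ j hjn', ih (by omega), SR_succ a (j + 1) (by omega)]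
    rw [fmid_apply a j hjn', if_neg (by omega), if_neg (by omega)]

private lemma insNth_lt {n : ℕ} (i : Fin (n + 1)) (a : Fin n → R) (t : ℕ)
    (h1 : t < n) (h2 : t < i.val) (h3 : t < n + 1) :
    Fin.insertNth (α := fun _ => R) i 0 a ⟨t, h3⟩ = a ⟨t, h1⟩ := by
  have e : (⟨t, h3⟩ : Fin (n + 1)) = i.succAbove ⟨t, h1⟩ := by
    rw [Fin.succAbove_of_castSucc_lt i ⟨t, h1⟩ (by simpa [Fin.lt_def] using h2)]
    rfl
  rw [e, Fin.insertNth_apply_succAbove]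

private lemma insNth_ge {n : ℕ} (i : Fin (n + 1)) (a : Fin n → R) (t : ℕ)
    (h1 : t < n) (h2 : i.val ≤ t) (h3 : t + 1 < n + 1) :
    Fin.insertNth (α := fun _ => R) i 0 a ⟨t + 1, h3⟩ = a ⟨t, h1⟩ := by
  have e : (⟨t + 1, h3⟩ : Fin (n + 1)) = i.succAbove ⟨t, h1⟩ := by
    rw [Fin.succAbove_of_le_castSucc i ⟨t, h1⟩ (by simpa [Fin.le_def] using h2)]
    rfl
  rw [e, Fin.insertNth_apply_succAbove]

private lemma insNth_same {n : ℕ} (i : Fin (n + 1)) (a : Fin n → R) (h3 : i.val < n + 1) :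
    Fin.insertNth (α := fun _ => R) i 0 a ⟨i.val, h3⟩ = 0 := by
  have e : (⟨i.val, h3⟩ : Fin (n + 1)) = i := rfl
  rw [e, Fin.insertNth_apply_same]

private lemma SR_ins_le {n : ℕ} (i : Fin (n + 1)) (a : Fin n → R) :
    ∀ j, j ≤ i.val → SR (Fin.insertNth (α := fun _ => R) i 0 a) j = SR a j := by
  intro j
  induction j with
  | zero => intro _; rfl
  | succ j ih =>
    intro hj
    have hjn : j < n := by omega
    rw [SR_succ _ j (by omega), SR_succ a j hjn, ih (by omega),
      insNth_lt i a j hjn (by omega)]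

private lemma SR_ins_gt {n : ℕ} (i : Fin (n + 1)) (a : Fin n → R) :
    ∀ j, i.val ≤ j → j ≤ n → SR (Fin.insertNth (α := fun _ => R) i 0 a) (j + 1) = SR a j := by
  intro j hj
  induction j, hj using Nat.le_induction with
  | base =>
    intro _
    rw [SR_succ _ i.val (by omega), insNth_same i a (by omega),
      SR_ins_le i a i.val le_rfl, add_zero]
  | succ j hj ih =>
    intro hjn
    have hjn' : j < n := by omega
    rw [SR_succ _ (j + 1) (by omega), ih (by omega), SR_succ a j hjn',
      insNth_ge i a j hjn' hj]

/-- for a crossed module `η : R → S` and the induced algebra structure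
on `B_n = S × Rⁿ`, every face map `dᵢ : B_{n+1} → B_n` with `i ≥ 1` (i.e. the maps
adding consecutive coordinates and the last face dropping the last coordinate), and
every degeneracy `sᵢ : B_n → B_{n+1}`, is a `k`-algebra homomorphism. -/
theorem stmt17 (η : R →ₙₐ[k] S) (C : CMod k η) (n : ℕ) :
    (∀ i : Fin (n + 2), i ≠ 0 →
      (∀ x y : S × (Fin (n + 1) → R),
          bface (⇑η) n i (x + y) = bface (⇑η) n i x + bface (⇑η) n i y) ∧
      (∀ (c : k) (x : S × (Fin (n + 1) → R)),
          bface (⇑η) n i (c • x) = c • bface (⇑η) n i x) ∧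
      (∀ x y : S × (Fin (n + 1) → R),
          bface (⇑η) n i (mulB C (n + 1) x y)
            = mulB C n (bface (⇑η) n i x) (bface (⇑η) n i y))) ∧
    (∀ i : Fin (n + 1),
      (∀ x y : S × (Fin n → R), bdegen n i (x + y) = bdegen n i x + bdegen n i y) ∧
      (∀ (c : k) (x : S × (Fin n → R)),
          bdegen (R := R) (S := S) n i (c • x) = c • bdegen n i x) ∧
      (∀ x y : S × (Fin n → R),
          bdegen n i (mulB C n x y) = mulB C (n + 1) (bdegen n i x) (bdegen n i y))) := by
  have act0 : ∀ s : S, C.act s 0 = 0 := fun s => by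
    have h := C.act_smul 0 s 0; simpa using h
  constructor
  · intro i hi0
    by_cases hil : i = Fin.last (n + 1)
    · subst hil
      refine ⟨fun x y => ?_, fun c x => ?_, fun x y => ?_⟩
      · simp only [bface, if_neg hi0, eq_self_iff_true, if_true]; rfl
      · simp only [bface, if_neg hi0, eq_self_iff_true, if_true]; rfl
      · simp only [bface, if_neg hi0, eq_self_iff_true, if_true, mulB]
        refine Prod.ext rfl (funext fun j => ?_)
        rcases j with ⟨jv, hj⟩
        simp only [sum_Iio_eq, sum_Iic_eq, Fin.coe_castSucc, Fin.val_mk]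
        rw [SR_castSucc x.2 jv (by omega), SR_castSucc y.2 (jv + 1) (by omega)]
    · have hi1 : 1 ≤ (i : ℕ) := by
        rcases Nat.eq_zero_or_pos (i : ℕ) with h | h
        · exact absurd (Fin.ext h) hi0
        · exact h
      have hin : (i : ℕ) ≤ n := by
        have := Fin.val_lt_last hil
        omega
      have hb : ∀ p : S × (Fin (n + 1) → R),
          bface (⇑η) n i p = (p.1, fmid (i : ℕ) p.2) := fun p => by
        simp only [bface, if_neg hi0, if_neg hil]; rfl
      refine ⟨fun x y => ?_, fun c x => ?_, fun x y => ?_⟩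
      · simp only [hb]
        refine Prod.ext rfl (funext fun j => ?_)
        rcases j with ⟨jv, hj⟩
        simp only [Prod.snd_add, Pi.add_apply, fmid_apply _ jv hj]
        split_ifs <;> [rfl; abel; rfl]
      · simp only [hb]
        refine Prod.ext rfl (funext fun j => ?_)
        rcases j with ⟨jv, hj⟩
        simp only [Prod.smul_snd, Pi.smul_apply, fmid_apply _ jv hj]
        split_ifs <;> simp [smul_add]
      · simp only [hb, mulB]
        refine Prod.ext rfl (funext fun j => ?_)
        rcases j with ⟨jv, hj⟩
        simp only [sum_Iio_eq, sum_Iic_eq, Fin.val_mk, fmid_apply _ jv hj]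
        rcases Nat.lt_trichotomy (jv + 1) (i : ℕ) with h | h | h
        · rw [if_pos h, if_pos h, if_pos h,
            SR_fmid_lt x.2 hin jv (by omega), SR_fmid_lt y.2 hin (jv + 1) h]
        · rw [if_neg (by omega), if_pos h, if_neg (by omega), if_pos h,
            if_neg (by omega), if_pos h,
            SR_fmid_lt x.2 hin jv (by omega),
            SR_fmid_ge y.2 hi1 hin (jv + 1) (by omega) (by omega)]
          rw [SR_succ x.2 jv (by omega), SR_succ y.2 (jv + 1) (by omega)]
          simp only [C.act_add, add_mul, mul_add]
          abel
        · rw [if_neg (by omega), if_neg (by omega), if_neg (by omega),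
            if_neg (by omega), if_neg (by omega), if_neg (by omega),
            SR_fmid_ge x.2 hi1 hin jv (by omega) (by omega),
            SR_fmid_ge y.2 hi1 hin (jv + 1) (by omega) (by omega)]
  · intro i
    refine ⟨fun x y => ?_, fun c x => ?_, fun x y => ?_⟩
    · refine Prod.ext rfl (funext fun t => ?_)
      show Fin.insertNth (α := fun _ => R) i 0 (x.2 + y.2) t
        = Fin.insertNth (α := fun _ => R) i 0 x.2 t
          + Fin.insertNth (α := fun _ => R) i 0 y.2 t
      by_cases ht : t = i
      · subst ht; simp [Fin.insertNth_apply_same]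
      · obtain ⟨u, rfl⟩ := Fin.exists_succAbove_eq ht
        simp [Fin.insertNth_apply_succAbove]
    · refine Prod.ext rfl (funext fun t => ?_)
      show Fin.insertNth (α := fun _ => R) i 0 (c • x.2) t
        = c • Fin.insertNth (α := fun _ => R) i 0 x.2 t
      by_cases ht : t = i
      · subst ht; simp [Fin.insertNth_apply_same]
      · obtain ⟨u, rfl⟩ := Fin.exists_succAbove_eq ht
        simp [Fin.insertNth_apply_succAbove]
    · simp only [bdegen, mulB]
      refine Prod.ext rfl (funext fun t => ?_)
      rcases t with ⟨tv, htv⟩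
      simp only []
      rcases Nat.lt_trichotomy tv (i : ℕ) with h | h | h
      · have htn : tv < n := by omega
        rw [insNth_lt i _ tv htn h htv, insNth_lt i _ tv htn h htv,
          insNth_lt i _ tv htn h htv]
        simp only [sum_Iio_eq, sum_Iic_eq, Fin.val_mk]
        rw [SR_ins_le i x.2 tv (by omega), SR_ins_le i y.2 (tv + 1) (by omega)]
      · subst h
        rw [insNth_same i _ htv, insNth_same i _ htv, insNth_same i _ htv]
        simp [act0]
      · obtain ⟨u, rfl⟩ : ∃ u, tv = u + 1 := ⟨tv - 1, by omega⟩
        have hun : u < n := by omega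
        rw [insNth_ge i _ u hun (by omega) htv, insNth_ge i _ u hun (by omega) htv,
          insNth_ge i _ u hun (by omega) htv]
        simp only [sum_Iio_eq, sum_Iic_eq, Fin.val_mk]
        rw [SR_ins_gt i x.2 u (by omega) (by omega),
          SR_ins_gt i y.2 (u + 1) (by omega) (by omega)]
end
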